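/- For every L with 1 ≤ L ≤ N and every spatial site i ∈ ι, the rescaled feature maps satisfy the bounded increment property |S_L i − S_{L−1} i| ≤ 1/N, regardless of the choice of the block maps F_1, …, F_N. -/

import Mathlib

/-! With `a = (L - 1) X_{L-1} ≥ 0` and `t = tanh(F_L(X_{L-1}) i) ∈ (-1, 1)`, the recursion reads
`L X_L = max 0 (a + t)`, so `N (S_L - S_{L-1}) = max 0 (a + t) - a`. Clipping at `0` only moves
`a + t` towards `a ≥ 0`, hence this difference is at most `|t| < 1` in absolute value. -/

lemma abs_max_zero_add_sub_le {a : ℝ} (ha : 0 ≤ a) (t : ℝ) : |max 0 (a + t) - a| ≤ |t| := by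
  rcases le_total 0 (a + t) with h | h
  · simp [max_eq_right h]
  · rw [max_eq_left h, zero_sub, abs_neg, abs_of_nonneg ha]
    exact le_trans (by linarith) (neg_le_abs t)

lemma abs_mul_max_zero_damped_sub_le {k x : ℝ} (hk : 0 ≤ k) (hx : 0 ≤ k * x) (y : ℝ) :
    |(k + 1) * max 0 ((1 - 1 / (k + 1)) * x + 1 / (k + 1) * y) - k * x| ≤ |y| := by
  have hk1 : 0 < k + 1 := by linarith
  have hscale : (k + 1) * ((1 - 1 / (k + 1)) * x + 1 / (k + 1) * y) = k * x + y := by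
    field_simp
    ring
  rw [mul_max_of_nonneg _ _ hk1.le, mul_zero, hscale]
  exact abs_max_zero_add_sub_le hx y

theorem facnn_bounded_increment_maps_general
    {ι : Type*} (N : ℕ)
    (F : ℕ → (ι → ℝ) → (ι → ℝ))
    (X : ℕ → ι → ℝ) (S : ℕ → ι → ℝ)
    (hX : ∀ L, 1 ≤ L → L ≤ N → ∀ i : ι,
      X L i = max 0 ((1 - 1 / (L : ℝ)) * X (L - 1) i
        + (1 / (L : ℝ)) * Real.tanh (F L (X (L - 1)) i)))
    (hS0 : ∀ i : ι, S 0 i = 0)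
    (hS : ∀ L, 1 ≤ L → L ≤ N → ∀ i : ι,
      S L i = ((L : ℝ) / (N : ℝ)) * X L i) :
    ∀ L, 1 ≤ L → L ≤ N → ∀ i : ι,
      |S L i - S (L - 1) i| ≤ 1 / (N : ℝ) := by
  intro L hL hLN i
  obtain ⟨k, rfl⟩ := Nat.exists_eq_add_of_le' hL
  have hN : (0 : ℝ) < N := by exact_mod_cast hL.trans hLN
  obtain ⟨hSk, hXk⟩ : S k i = (k : ℝ) / N * X k i ∧ 0 ≤ (k : ℝ) * X k i := by
    rcases Nat.eq_zero_or_pos k with rfl | hk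
    · simp [hS0 i]
    · refine ⟨hS k hk (by omega) i, mul_nonneg k.cast_nonneg ?_⟩
      rw [hX k hk (by omega) i]
      exact le_max_left _ _
  have hdiff : S (k + 1) i - S k i = ((k + 1) * X (k + 1) i - k * X k i) / N := by
    rw [hS (k + 1) hL hLN i, hSk]
    push_cast
    ring
  rw [Nat.add_sub_cancel, hdiff, abs_div, abs_of_pos hN]
  gcongr
  rw [hX (k + 1) hL hLN i, Nat.add_sub_cancel]
  push_cast
  exact (abs_mul_max_zero_damped_sub_le k.cast_nonneg hXk _).trans (Real.abs_tanh_lt_one _).le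

/-- bounded increment for feature maps:
With arbitrary block maps `F_L` and the dampened skip connection
`X_L i = ReLU((1 − 1/L)·X_{L−1} i + (1/L)·tanh(F_L(X_{L−1}) i))`, the rescaled
feature maps `S_0 = 0`, `S_L i = (L/N)·X_L i` satisfy
`|S_L i − S_{L−1} i| ≤ 1/N` for all `1 ≤ L ≤ N` and every site `i`. -/
theorem facnn_bounded_increment_maps
    {ι : Type*} [Fintype ι] (N : ℕ) (hN : 1 ≤ N)
    (F : ℕ → (ι → ℝ) → (ι → ℝ))
    (X : ℕ → ι → ℝ) (S : ℕ → ι → ℝ)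
    (hX : ∀ L, 1 ≤ L → L ≤ N → ∀ i : ι,
      X L i = max 0 ((1 - 1 / (L : ℝ)) * X (L - 1) i
        + (1 / (L : ℝ)) * Real.tanh (F L (X (L - 1)) i)))
    (hS0 : ∀ i : ι, S 0 i = 0)
    (hS : ∀ L, 1 ≤ L → L ≤ N → ∀ i : ι,
      S L i = ((L : ℝ) / (N : ℝ)) * X L i) :
    ∀ L, 1 ≤ L → L ≤ N → ∀ i : ι,
      |S L i - S (L - 1) i| ≤ 1 / (N : ℝ) :=
  facnn_bounded_increment_maps_general N F X S hX hS0 hS
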